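/- arXiv:1203.4223 — 2 statements merged into one kernel-verified Lean document; each statement's English description precedes it below -/
import Mathlib

section
/- Suppose (x_i)_{i∈I} and (y_i)_{i∈I} are real numbers indexed by a finite nonempty set I such that |x_i − x| ≤ δ₁ and |y_i − y| ≤ δ₂ for some x, y ∈ ℝ and every i ∈ I. Then |Σ_{i∈I} x_i y_i − (1/|I|)(Σ_{i∈I} x_i)(Σ_{i∈I} y_i)| ≤ 2 |I| δ₁ δ₂. -/
/-! Subtracting constants from `xᵢ` and `yᵢ` does not change the co-moment
`∑ xᵢ yᵢ - (∑ xᵢ)(∑ yᵢ)/|I|`, so we may assume `|xᵢ| ≤ δ₁` and `|yᵢ| ≤ δ₂`. Then each of the two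
terms is bounded by `|I| δ₁ δ₂`. -/

open Finset

namespace Finset

variable {ι K : Type*} [Field K] [LinearOrder K] [IsStrictOrderedRing K]

/-- `|s|` times the covariance of `f` and `g` under the uniform distribution on `s`. -/
def comoment (s : Finset ι) (f g : ι → K) : K :=
  ∑ i ∈ s, f i * g i - (∑ i ∈ s, f i) * (∑ i ∈ s, g i) / s.card

theorem comoment_sub_const (s : Finset ι) (f g : ι → K) (c d : K) :
    comoment s (fun i => f i - c) (fun i => g i - d) = comoment s f g := by
  rcases s.eq_empty_or_nonempty with rfl | hs
  · simp [comoment]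
  have hcard : (s.card : K) ≠ 0 := by exact_mod_cast hs.card_pos.ne'
  simp only [comoment, sub_mul, mul_sub, sum_sub_distrib, ← sum_mul, ← mul_sum, sum_const,
    nsmul_eq_mul]
  field_simp
  ring

theorem abs_sum_le_card_mul {s : Finset ι} {f : ι → K} {a : K} (hf : ∀ i ∈ s, |f i| ≤ a) :
    |∑ i ∈ s, f i| ≤ s.card * a :=
  (abs_sum_le_sum_abs f s).trans <| by simpa using sum_le_card_nsmul s _ a hf

theorem abs_comoment_le {s : Finset ι} {f g : ι → K} {a b : K} (hf : ∀ i ∈ s, |f i| ≤ a)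
    (hg : ∀ i ∈ s, |g i| ≤ b) : |comoment s f g| ≤ 2 * s.card * a * b := by
  rcases s.eq_empty_or_nonempty with rfl | hs
  · simp [comoment]
  have hcard : (0 : K) < s.card := by exact_mod_cast hs.card_pos
  have hfg : |∑ i ∈ s, f i * g i| ≤ s.card * (a * b) :=
    abs_sum_le_card_mul fun i hi => abs_mul (f i) (g i) ▸
      mul_le_mul (hf i hi) (hg i hi) (abs_nonneg _) ((abs_nonneg _).trans (hf i hi))
  have hsf := abs_sum_le_card_mul hf
  have hsg := abs_sum_le_card_mul hg
  have hprod : |(∑ i ∈ s, f i) * (∑ i ∈ s, g i) / s.card| ≤ s.card * (a * b) := by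
    rw [abs_div, abs_mul, abs_of_pos hcard, div_le_iff₀ hcard]
    calc |∑ i ∈ s, f i| * |∑ i ∈ s, g i| ≤ (s.card * a) * (s.card * b) :=
          mul_le_mul hsf hsg (abs_nonneg _) ((abs_nonneg _).trans hsf)
      _ = s.card * (a * b) * s.card := by ring
  calc |comoment s f g| ≤ s.card * (a * b) + s.card * (a * b) :=
        (abs_sub _ _).trans (add_le_add hfg hprod)
    _ = 2 * s.card * a * b := by ring

end Finset

theorem sum_prod_approx_general {ι : Type*} (I : Finset ι)
    (xf yf : ι → ℝ) (x y δ₁ δ₂ : ℝ)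
    (hx : ∀ i ∈ I, |xf i - x| ≤ δ₁) (hy : ∀ i ∈ I, |yf i - y| ≤ δ₂) :
    |(∑ i ∈ I, xf i * yf i) - (∑ i ∈ I, xf i) * (∑ i ∈ I, yf i) / (I.card : ℝ)| ≤
      2 * (I.card : ℝ) * δ₁ * δ₂ := by
  rw [← comoment, ← comoment_sub_const I xf yf x y]
  exact abs_comoment_le hx hy

/-- If `|xᵢ - x| ≤ δ₁` and `|yᵢ - y| ≤ δ₂` for all `i` in a finite
nonempty index set `I`, then
`|∑ xᵢ yᵢ - (∑ xᵢ)(∑ yᵢ)/|I|| ≤ 2 |I| δ₁ δ₂`. -/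
theorem sum_prod_approx {ι : Type*} (I : Finset ι) (hI : I.Nonempty)
    (xf yf : ι → ℝ) (x y δ₁ δ₂ : ℝ)
    (hx : ∀ i ∈ I, |xf i - x| ≤ δ₁) (hy : ∀ i ∈ I, |yf i - y| ≤ δ₂) :
    |(∑ i ∈ I, xf i * yf i) - (∑ i ∈ I, xf i) * (∑ i ∈ I, yf i) / (I.card : ℝ)| ≤
      2 * (I.card : ℝ) * δ₁ * δ₂ :=
  sum_prod_approx_general I xf yf x y δ₁ δ₂ hx hy
end

section
/- Let G be a finite simple graph, let uvw be a triangle of G, and let xyz be a triangle of G sharing exactly one vertex with uvw, say x = u and {y,z} ∩ {v,w} = ∅. Let G' be the graph obtained from G by deleting the three edges xy, xz, yz. Then uvw is still a triangle of G', the co-degree of v and w is the same in G and G', the co-degrees of at most two of the three pairs {u,v}, {u,w}, {v,w} change, and B_{uvw}(G) − B_{uvw}(G') ≤ 4, where B_{uvw}(H) denotes the number of triangles of H distinct from uvw that share an edge with uvw (equivalently, B_{uvw} = Y_{u,v} + Y_{u,w} + Y_{v,w} − 3 where Y_{a,b} is the number of common neighbors of a and b). -/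
noncomputable section

/-- The co-degree of `a` and `b` in `H`: the number of common neighbors. -/
def codeg {V : Type*} (H : SimpleGraph V) (a b : V) : ℕ :=
  (H.neighborSet a ∩ H.neighborSet b).ncard

/-- `B_{uvw}(H) = Y_{u,v} + Y_{u,w} + Y_{v,w} - 3`, the number of triangles of `H`
other than `uvw` sharing an edge with the triangle `uvw`. -/
def Bval {V : Type*} (H : SimpleGraph V) (u v w : V) : ℕ :=
  codeg H u v + codeg H u w + codeg H v w - 3

/-- If `uvw` is a triangle of `G` and `xyz` is a triangle sharing exactly
one vertex with it (`x = u`, `{y,z} ∩ {v,w} = ∅`), and `G'` is obtained from `G` by deleting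
the three edges `uy, uz, yz`, then `uvw` is still a triangle of `G'`, the co-degree of `v,w`
is unchanged, at most two of the three co-degrees of pairs from `{u,v,w}` change, and
`B_{uvw}(G) - B_{uvw}(G') ≤ 4`. -/
theorem triangle_removal_local_effect {V : Type*} [Fintype V] [DecidableEq V]
    (G : SimpleGraph V) (u v w y z : V)
    (huv : G.Adj u v) (huw : G.Adj u w) (hvw : G.Adj v w)
    (huy : G.Adj u y) (huz : G.Adj u z) (hyz : G.Adj y z)
    (hyv : y ≠ v) (hyw : y ≠ w) (hzv : z ≠ v) (hzw : z ≠ w)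
    (G' : SimpleGraph V) (hG' : G' = G.deleteEdges {s(u, y), s(u, z), s(y, z)}) :
    (G'.Adj u v ∧ G'.Adj u w ∧ G'.Adj v w) ∧
      codeg G' v w = codeg G v w ∧
      ¬(codeg G' u v ≠ codeg G u v ∧ codeg G' u w ≠ codeg G u w ∧
        codeg G' v w ≠ codeg G v w) ∧
      Bval G u v w ≤ Bval G' u v w + 4 := by
  subst hG'
  set S : Set (Sym2 V) := {s(u, y), s(u, z), s(y, z)} with hS
  set G' := G.deleteEdges S with hG'
  have huvne := huv.ne; have huwne := huw.ne; have hvwne := hvw.ne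
  have huyne := huy.ne; have huzne := huz.ne; have hyzne := hyz.ne
  -- adjacency of edges not in S survives if endpoints avoid the pattern
  have hadj : ∀ a b : V, G'.Adj a b ↔ G.Adj a b ∧ s(a, b) ∉ S := fun a b =>
    SimpleGraph.deleteEdges_adj
  have hmem : ∀ a b : V, s(a, b) ∈ S ↔
      (a = u ∧ b = y ∨ a = y ∧ b = u) ∨ (a = u ∧ b = z ∨ a = z ∧ b = u) ∨
      (a = y ∧ b = z ∨ a = z ∧ b = y) := by
    intro a b
    simp only [hS, Set.mem_insert_iff, Set.mem_singleton_iff, Sym2.eq_iff]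
  have hAuv : G'.Adj u v := by
    rw [hadj, hmem]; refine ⟨huv, ?_⟩; push_neg; tauto
  have hAuw : G'.Adj u w := by
    rw [hadj, hmem]; refine ⟨huw, ?_⟩; push_neg; tauto
  have hAvw : G'.Adj v w := by
    rw [hadj, hmem]; refine ⟨hvw, ?_⟩; push_neg
    refine ⟨⟨?_, ?_⟩, ⟨?_, ?_⟩, ?_, ?_⟩ <;> rintro rfl rfl <;> simp_all
  -- neighbor sets of v and w are unchanged
  have hNv : G'.neighborSet v = G.neighborSet v := by
    ext t
    simp only [SimpleGraph.mem_neighborSet, hadj, hmem, and_iff_left_iff_imp]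
    intro ht; push_neg
    refine ⟨⟨?_, ?_⟩, ⟨?_, ?_⟩, ⟨?_, ?_⟩⟩ <;> rintro rfl <;> simp_all
  have hNw : G'.neighborSet w = G.neighborSet w := by
    ext t
    simp only [SimpleGraph.mem_neighborSet, hadj, hmem, and_iff_left_iff_imp]
    intro ht; push_neg
    refine ⟨⟨?_, ?_⟩, ⟨?_, ?_⟩, ⟨?_, ?_⟩⟩ <;> rintro rfl <;> simp_all
  have hcvw : codeg G' v w = codeg G v w := by
    unfold codeg; rw [hNv, hNw]
  -- codegree drop bounds for uv and uw
  have key : ∀ c : V, c ≠ y → c ≠ z → codeg G u c ≤ codeg G' u c + 2 := by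
    intro c hcy hcz
    have hsub : (G.neighborSet u ∩ G.neighborSet c) ⊆
        (G'.neighborSet u ∩ G'.neighborSet c) ∪ {y, z} := by
      intro t ht
      obtain ⟨ht1, ht2⟩ := ht
      by_cases hty : t = y
      · exact Or.inr (Or.inl hty)
      by_cases htz : t = z
      · exact Or.inr (Or.inr htz)
      left
      constructor
      · rw [SimpleGraph.mem_neighborSet, hadj, hmem]
        refine ⟨ht1, ?_⟩; push_neg
        have hut : u ≠ t := (SimpleGraph.mem_neighborSet G u t).mp ht1 |>.ne
        refine ⟨⟨?_, ?_⟩, ⟨?_, ?_⟩, ⟨?_, ?_⟩⟩ <;> intro h <;> simp_all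
      · rw [SimpleGraph.mem_neighborSet, hadj, hmem]
        refine ⟨ht2, ?_⟩; push_neg
        refine ⟨⟨?_, ?_⟩, ⟨?_, ?_⟩, ⟨?_, ?_⟩⟩ <;> rintro rfl <;> simp_all
    calc codeg G u c ≤ ((G'.neighborSet u ∩ G'.neighborSet c) ∪ {y, z} : Set V).ncard :=
          Set.ncard_le_ncard hsub (Set.toFinite _)
      _ ≤ (G'.neighborSet u ∩ G'.neighborSet c).ncard + ({y, z} : Set V).ncard :=
          Set.ncard_union_le _ _
      _ ≤ codeg G' u c + 2 := by
          unfold codeg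
          have : ({y, z} : Set V).ncard ≤ 2 := by
            apply le_trans (Set.ncard_insert_le _ _); simp
          omega
  have h1 := key v hyv.symm hzv.symm
  have h2 := key w hyw.symm hzw.symm
  refine ⟨⟨hAuv, hAuw, hAvw⟩, hcvw, ?_, ?_⟩
  · intro ⟨_, _, h3⟩; exact h3 hcvw
  · unfold Bval
    omega
end
end
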